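/- The product (x⁰⊗⋯⊗xⁿ)(y⁰⊗⋯⊗yᵐ) = x⁰⊗⋯⊗xⁿ⁻¹ ⊗ xⁿ₍₁₎y⁰S⁻¹(xⁿ₍₂ₘ₊₁₎) ⊗ ⋯ ⊗ xⁿ₍ₘ₎yᵐ⁻¹S⁻¹(xⁿ₍ₘ₊₂₎) ⊗ xⁿ₍ₘ₊₁₎yᵐ on 𝒦*(H) = ⊕ₙ H^⊗(n+1) is associative; in particular for degree-one elements ((x¹⊗b¹)(x²⊗b²))(x³⊗b³) = (x¹⊗b¹)((x²⊗b²)(x³⊗b³)). -/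

import Mathlib

/- STATEMENT 9: The product on 𝒦*(H) = ⊕ₙ H^⊗(n+1) is associative; in particular for
degree-one elements ((x¹⊗b¹)(x²⊗b²))(x³⊗b³) = (x¹⊗b¹)((x²⊗b²)(x³⊗b³)). -/

open TensorProduct

noncomputable section

variable (k : Type) [Field k] (H : Type) [Ring H] [HopfAlgebra k H]

def Delta2 : H →ₗ[k] (H ⊗[k] H) ⊗[k] H :=
  (TensorProduct.map Coalgebra.comul LinearMap.id) ∘ₗ Coalgebra.comul

variable {A B C : Type} [AddCommGroup A] [AddCommGroup B] [AddCommGroup C]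
  [Module k A] [Module k B] [Module k C]

def sw3 : (A ⊗[k] B) ⊗[k] C →ₗ[k] (A ⊗[k] C) ⊗[k] B :=
  (TensorProduct.assoc k A C B).symm.toLinearMap
    ∘ₗ (TensorProduct.map LinearMap.id (TensorProduct.comm k B C).toLinearMap)
    ∘ₗ (TensorProduct.assoc k A B C).toLinearMap

def twist (X : Type) [AddCommGroup X] [Module k X] (Sm : H →ₗ[k] H)
    (act : H ⊗[k] X →ₗ[k] X) : H ⊗[k] (H ⊗[k] X) →ₗ[k] H ⊗[k] X :=
  (TensorProduct.map (LinearMap.mul' k H) act)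
    ∘ₗ (TensorProduct.tensorTensorTensorComm k H H H X).toLinearMap
    ∘ₗ (TensorProduct.map
          ((TensorProduct.map (LinearMap.mul' k H) LinearMap.id) ∘ₗ sw3 k)
          (TensorProduct.map Sm LinearMap.id))
    ∘ₗ (TensorProduct.tensorTensorTensorComm k (H ⊗[k] H) H H X).toLinearMap
    ∘ₗ (TensorProduct.map (Delta2 k H) LinearMap.id)

variable (Sinv : H →ₗ[k] H)

/-- `𝒦ⁿ(H) = H^⊗(n+1)`, nested as `H ⊗ (H ⊗ (⋯ ⊗ H))`. -/
def KC : ℕ → ModuleCat k := fun n =>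
  Nat.rec (ModuleCat.of k H) (fun _ ih => ModuleCat.of k (H ⊗[k] ih)) n

/-- The left action of `H` on `𝒦ⁿ(H)` : `h·(h⁰⊗⋯⊗hⁿ) = h₍₁₎h⁰S⁻¹(h₍₂ₙ₊₁₎)⊗⋯⊗h₍ₙ₊₁₎hⁿ`. -/
def lactK : ∀ n : ℕ, H ⊗[k] (KC k H n) →ₗ[k] (KC k H n)
  | 0 => LinearMap.mul' k H
  | n + 1 => twist k H (KC k H n) Sinv (lactK n)

/-- The product `𝒦ⁿ(H) ⊗ 𝒦ᵐ(H) → 𝒦ⁿ⁺ᵐ(H)`. -/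
def muK : ∀ (n m : ℕ), (KC k H n) ⊗[k] (KC k H m) →ₗ[k] KC k H (m + n)
  | 0, m => lactK k H Sinv m
  | n + 1, m =>
    (TensorProduct.map LinearMap.id (muK n m))
      ∘ₗ (TensorProduct.assoc k H (KC k H n) (KC k H m)).toLinearMap

/-- `(h₁ ⊗ h₂) ⊗ h₃ ↦ h₁ Sinv(h₃) ⊗ h₂`. -/
def phi2 : (H ⊗[k] H) ⊗[k] H →ₗ[k] H ⊗[k] H :=
  (TensorProduct.map (LinearMap.mul' k H) LinearMap.id)
    ∘ₗ (TensorProduct.map (TensorProduct.map LinearMap.id Sinv) LinearMap.id)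
    ∘ₗ sw3 k

/-- The identification `𝒦ⁿ⁺¹(H) = H ⊗ 𝒦ⁿ(H)`. -/
def unroll (n : ℕ) : (KC k H (n + 1)) →ₗ[k] H ⊗[k] (KC k H n) := LinearMap.id

/-- The differential of `𝒦*(H)`. -/
def dK : ∀ n : ℕ, (KC k H n) →ₗ[k] (KC k H (n + 1))
  | 0 => (phi2 k H Sinv ∘ₗ Delta2 k H) - (TensorProduct.mk k H H 1)
  | n + 1 =>
    ((TensorProduct.assoc k H H (KC k H n)).toLinearMap
        ∘ₗ (TensorProduct.map Coalgebra.comul LinearMap.id))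
      - (TensorProduct.mk k H (H ⊗[k] (KC k H n)) 1)
      - (TensorProduct.map (LinearMap.id : H →ₗ[k] H) (TensorProduct.mk k H (KC k H n) 1))
      - (TensorProduct.map (LinearMap.id : H →ₗ[k] H) (unroll k H n ∘ₗ dK n))

/-- Transport along an equality of degrees. -/
def dcast {a b : ℕ} (h : a = b) : (KC k H a) →ₗ[k] (KC k H b) := by
  subst h; exact LinearMap.id

section
variable (k : Type) [Field k] (H : Type) [Ring H] [HopfAlgebra k H]
open TensorProduct

lemma Delta2_mul (x y : H) : Delta2 k H (x * y) = Delta2 k H x * Delta2 k H y := by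
  simp only [Delta2, LinearMap.comp_apply, Bialgebra.comul_mul]
  set u := Coalgebra.comul (R := k) x
  set v := Coalgebra.comul (R := k) y
  clear_value u v
  induction u using TensorProduct.induction_on with
  | zero => simp
  | add p q hp hq => simp [add_mul, hp, hq]
  | tmul a b =>
    induction v using TensorProduct.induction_on with
    | zero => simp
    | add p q hp hq => simp [mul_add, hp, hq]
    | tmul c d => simp [Algebra.TensorProduct.tmul_mul_tmul, Bialgebra.comul_mul]

def TnMap (X : Type) [AddCommGroup X] [Module k X] (Sm : H →ₗ[k] H)
    (act : H ⊗[k] X →ₗ[k] X) : ((H ⊗[k] H) ⊗[k] H) ⊗[k] (H ⊗[k] X) →ₗ[k] H ⊗[k] X :=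
  (TensorProduct.map (LinearMap.mul' k H) act)
    ∘ₗ (TensorProduct.tensorTensorTensorComm k H H H X).toLinearMap
    ∘ₗ (TensorProduct.map
          ((TensorProduct.map (LinearMap.mul' k H) LinearMap.id) ∘ₗ sw3 k)
          (TensorProduct.map Sm LinearMap.id))
    ∘ₗ (TensorProduct.tensorTensorTensorComm k (H ⊗[k] H) H H X).toLinearMap

lemma twist_eq_TnMap (X : Type) [AddCommGroup X] [Module k X] (Sm : H →ₗ[k] H)
    (act : H ⊗[k] X →ₗ[k] X) :
    twist k H X Sm act = TnMap k H X Sm act ∘ₗ (TensorProduct.map (Delta2 k H) LinearMap.id) :=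
  rfl

lemma TnMap_tmul (X : Type) [AddCommGroup X] [Module k X] (Sm : H →ₗ[k] H)
    (act : H ⊗[k] X →ₗ[k] X) (a1 a2 a3 h : H) (φ : X) :
    TnMap k H X Sm act (((a1 ⊗ₜ[k] a2) ⊗ₜ[k] a3) ⊗ₜ[k] (h ⊗ₜ[k] φ))
      = (a1 * h * Sm a3) ⊗ₜ[k] act (a2 ⊗ₜ[k] φ) := by
  simp [TnMap, sw3, mul_assoc]

lemma TnMap_mul (X : Type) [AddCommGroup X] [Module k X] (Sm : H →ₗ[k] H)
    (hSm : ∀ a b : H, Sm (a * b) = Sm b * Sm a)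
    (act : H ⊗[k] X →ₗ[k] X)
    (hact : ∀ (x y : H) (φ : X), act ((x * y) ⊗ₜ[k] φ) = act (x ⊗ₜ[k] act (y ⊗ₜ[k] φ)))
    (c d : (H ⊗[k] H) ⊗[k] H) (w : H ⊗[k] X) :
    TnMap k H X Sm act ((c * d) ⊗ₜ[k] w)
      = TnMap k H X Sm act (c ⊗ₜ[k] TnMap k H X Sm act (d ⊗ₜ[k] w)) := by
  induction c using TensorProduct.induction_on with
  | zero => simp
  | add u v hu hv => simp only [add_mul, add_tmul, map_add, hu, hv]
  | tmul p a3 =>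
    induction p using TensorProduct.induction_on with
    | zero => simp
    | add u v hu hv => simp only [add_tmul, add_mul, map_add, hu, hv]
    | tmul a1 a2 =>
      induction d using TensorProduct.induction_on with
      | zero => simp
      | add u v hu hv => simp only [mul_add, add_tmul, tmul_add, map_add, hu, hv]
      | tmul q b3 =>
        induction q using TensorProduct.induction_on with
        | zero => simp
        | add u v hu hv => simp only [add_tmul, mul_add, tmul_add, map_add, hu, hv]
        | tmul b1 b2 =>
          induction w using TensorProduct.induction_on with
          | zero => simp
          | add u v hu hv => simp only [tmul_add, map_add, hu, hv]
          | tmul h φ =>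
            rw [Algebra.TensorProduct.tmul_mul_tmul, Algebra.TensorProduct.tmul_mul_tmul]
            rw [TnMap_tmul, TnMap_tmul, TnMap_tmul, hSm, ← hact]
            rw [show a1 * (b1 * h * Sm b3) * Sm a3 = a1 * b1 * h * (Sm b3 * Sm a3) by
              simp [mul_assoc]]

variable (Sinv : H →ₗ[k] H)

lemma lact_mul (hSm : ∀ a b : H, Sinv (a * b) = Sinv b * Sinv a) :
    ∀ (n : ℕ) (x y : H) (w : KC k H n),
      lactK k H Sinv n ((x * y) ⊗ₜ[k] w)
        = lactK k H Sinv n (x ⊗ₜ[k] lactK k H Sinv n (y ⊗ₜ[k] w)) := by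
  intro n
  induction n with
  | zero =>
    intro x y w
    change H at w
    show LinearMap.mul' k H ((x * y) ⊗ₜ[k] w)
      = LinearMap.mul' k H (x ⊗ₜ[k] LinearMap.mul' k H (y ⊗ₜ[k] w))
    simp [mul_assoc]
  | succ n ih =>
    intro x y w
    revert w
    show ∀ w : H ⊗[k] KC k H n, twist k H (KC k H n) Sinv (lactK k H Sinv n) ((x * y) ⊗ₜ[k] w)
      = twist k H (KC k H n) Sinv (lactK k H Sinv n)
          (x ⊗ₜ[k] twist k H (KC k H n) Sinv (lactK k H Sinv n) (y ⊗ₜ[k] w))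
    intro w
    rw [twist_eq_TnMap]
    simp only [LinearMap.comp_apply, TensorProduct.map_tmul, LinearMap.id_coe, id_eq]
    rw [Delta2_mul]
    exact TnMap_mul k H (KC k H n) Sinv hSm (lactK k H Sinv n) ih _ _ w

lemma muK_lact (hSm : ∀ a b : H, Sinv (a * b) = Sinv b * Sinv a) :
    ∀ (m l : ℕ) (x : H) (Φ : KC k H m) (Ξ : KC k H l),
      muK k H Sinv m l ((lactK k H Sinv m (x ⊗ₜ[k] Φ)) ⊗ₜ[k] Ξ)
        = lactK k H Sinv (l + m) (x ⊗ₜ[k] muK k H Sinv m l (Φ ⊗ₜ[k] Ξ)) := by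
  intro m
  induction m with
  | zero =>
    intro l x Φ Ξ
    exact lact_mul k H Sinv hSm l x Φ Ξ
  | succ m ih =>
    intro l x Φ Ξ
    have claim : ∀ (c : (H ⊗[k] H) ⊗[k] H) (Φ : H ⊗[k] KC k H m),
        (TensorProduct.map LinearMap.id (muK k H Sinv m l) ∘ₗ (TensorProduct.assoc k H (KC k H m) (KC k H l)).toLinearMap)
          ((TnMap k H (KC k H m) Sinv (lactK k H Sinv m) (c ⊗ₜ[k] Φ)) ⊗ₜ[k] Ξ)
        = TnMap k H (KC k H (l + m)) Sinv (lactK k H Sinv (l + m))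
            (c ⊗ₜ[k] (TensorProduct.map LinearMap.id (muK k H Sinv m l) ∘ₗ (TensorProduct.assoc k H (KC k H m) (KC k H l)).toLinearMap) (Φ ⊗ₜ[k] Ξ)) := by
      intro c Φ
      induction Φ using TensorProduct.induction_on with
      | zero => simp
      | add u v hu hv => simp only [tmul_add, add_tmul, map_add, hu, hv]
      | tmul h Φ' =>
        induction c using TensorProduct.induction_on with
        | zero => simp
        | add u v hu hv => simp only [add_tmul, map_add, hu, hv]
        | tmul p a3 =>
          induction p using TensorProduct.induction_on with
          | zero => simp
          | add u v hu hv => simp only [add_tmul, map_add, hu, hv]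
          | tmul a1 a2 =>
            simp only [LinearMap.comp_apply, LinearEquiv.coe_coe, assoc_tmul, map_tmul,
              LinearMap.id_apply, TnMap_tmul, ih]
    revert Φ
    show ∀ Φ : H ⊗[k] KC k H m,
      (TensorProduct.map LinearMap.id (muK k H Sinv m l) ∘ₗ (TensorProduct.assoc k H (KC k H m) (KC k H l)).toLinearMap) ((twist k H (KC k H m) Sinv (lactK k H Sinv m) (x ⊗ₜ[k] Φ)) ⊗ₜ[k] Ξ)
        = twist k H (KC k H (l + m)) Sinv (lactK k H Sinv (l + m)) (x ⊗ₜ[k] (TensorProduct.map LinearMap.id (muK k H Sinv m l) ∘ₗ (TensorProduct.assoc k H (KC k H m) (KC k H l)).toLinearMap) (Φ ⊗ₜ[k] Ξ))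
    intro Φ
    exact claim (Delta2 k H x) Φ
end

section
variable (k : Type) [Field k] (H : Type) [Ring H] [HopfAlgebra k H]
open TensorProduct
local notation "S" => HopfAlgebra.antipode (R := k) (A := H)
local notation "ε" => Coalgebra.counit (R := k) (A := H)

lemma repr_counit_left {a : H} (ra : Coalgebra.Repr k a (H × H)) :
    ∑ i ∈ ra.index, ε (ra.left i) • ra.right i = a := by
  have h := congrArg (TensorProduct.lid k H) (Coalgebra.sum_counit_tmul_eq (R := k) ra)
  simp only [map_sum, lid_tmul] at h
  simpa using h

lemma repr_counit_right {a : H} (ra : Coalgebra.Repr k a (H × H)) :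
    ∑ i ∈ ra.index, ε (ra.right i) • ra.left i = a := by
  have h := congrArg (TensorProduct.rid k H) (Coalgebra.sum_tmul_counit_eq (R := k) ra)
  simp only [map_sum, rid_tmul] at h
  simpa using h

lemma sum_S_mul {x : H} (W : H) (r : Coalgebra.Repr k x (H × H)) :
    ∑ j ∈ r.index, S (r.left j) * (r.right j * W) = ε x • W := by
  simp only [← mul_assoc]
  rw [← Finset.sum_mul, HopfAlgebra.sum_antipode_mul_eq_smul, smul_mul_assoc, one_mul]

lemma counit_smul_apply {a : H} (ra : Coalgebra.Repr k a (H × H)) (g : H →ₗ[k] H) :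
    ∑ i ∈ ra.index, ε (ra.left i) • g (ra.right i) = g a := by
  have h := congrArg g (repr_counit_left k H ra)
  rw [map_sum] at h
  simpa only [map_smul] using h

lemma antipode_mul (a b : H) : S (a * b) = S b * S a := by
  set ra := Coalgebra.Repr.arbitrary k a with hra
  set rb := Coalgebra.Repr.arbitrary k b with hrb
  set ra1 : ∀ i : ra.ι, Coalgebra.Repr k (ra.left i) (H × H) :=
    fun i => Coalgebra.Repr.arbitrary k (ra.left i) with hra1
  set ra2 : ∀ i : ra.ι, Coalgebra.Repr k (ra.right i) (H × H) :=
    fun i => Coalgebra.Repr.arbitrary k (ra.right i) with hra2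
  set rb1 : ∀ p : rb.ι, Coalgebra.Repr k (rb.left p) (H × H) :=
    fun p => Coalgebra.Repr.arbitrary k (rb.left p) with hrb1
  set rb2 : ∀ p : rb.ι, Coalgebra.Repr k (rb.right p) (H × H) :=
    fun p => Coalgebra.Repr.arbitrary k (rb.right p) with hrb2
  -- Step B : expand ε-scaled unit via antipode axiom
  have stepB : ∀ (i : ra.ι) (p : rb.ι),
      (ε (ra.right i) * ε (rb.right p)) • (1 : H)
        = ∑ j ∈ (ra2 i).index, ∑ q ∈ (rb2 p).index,
            ((ra2 i).left j * (rb2 p).left q) * S ((ra2 i).right j * (rb2 p).right q) := by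
    intro i p
    have h1 : Coalgebra.comul (R := k) (ra.right i * rb.right p)
        = ∑ j ∈ (ra2 i).index, ∑ q ∈ (rb2 p).index,
            ((ra2 i).left j * (rb2 p).left q) ⊗ₜ[k] ((ra2 i).right j * (rb2 p).right q) := by
      rw [Bialgebra.comul_mul, ← (ra2 i).eq, ← (rb2 p).eq, Finset.sum_mul_sum]
      simp [Algebra.TensorProduct.tmul_mul_tmul]
    have h2 := HopfAlgebra.mul_antipode_lTensor_comul_apply (R := k) (ra.right i * rb.right p)
    rw [h1] at h2
    simp only [map_sum, LinearMap.lTensor_tmul, LinearMap.mul'_apply] at h2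
    rw [h2]
    simp [Algebra.smul_def]
  -- key1 : collapse the a-sums
  have key1 : ∀ (p : rb.ι) (q : (rb2 p).ι),
      (∑ i ∈ ra.index, ∑ j ∈ (ra2 i).index,
        S (ra.left i) * ((ra2 i).left j *
          ((rb2 p).left q * S ((ra2 i).right j * (rb2 p).right q))))
        = (rb2 p).left q * S (a * (rb2 p).right q) := by
    intro p q
    set c1 := (rb2 p).left q
    set c2 := (rb2 p).right q
    set L : H ⊗[k] (H ⊗[k] H) →ₗ[k] H :=
      LinearMap.mul' k H ∘ₗ map (S)
        (LinearMap.mul' k H ∘ₗ map LinearMap.id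
          ((LinearMap.mulLeft k c1) ∘ₗ (S) ∘ₗ (LinearMap.mulRight k c2))) with hL
    have E2 := congrArg L (Coalgebra.sum_tmul_tmul_eq (R := k) ra ra1 ra2)
    simp only [hL, map_sum, LinearMap.comp_apply, map_tmul, LinearMap.mul'_apply,
      LinearMap.mulLeft_apply, LinearMap.mulRight_apply, LinearMap.id_coe, id_eq] at E2
    rw [← E2]
    have e3 : ∀ i : ra.ι,
        ∑ j ∈ (ra1 i).index,
          S ((ra1 i).left j) * ((ra1 i).right j * (c1 * S (ra.right i * c2)))
          = ε (ra.left i) • (c1 * S (ra.right i * c2)) :=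
      fun i => sum_S_mul k H _ (ra1 i)
    rw [Finset.sum_congr rfl (fun i _ => e3 i)]
    exact counit_smul_apply k H ra
      ((LinearMap.mulLeft k c1) ∘ₗ (S) ∘ₗ (LinearMap.mulRight k c2))
  -- key2 : collapse the b-sums
  have key2 :
      (∑ p ∈ rb.index, ∑ q ∈ (rb2 p).index,
        S (rb.left p) * ((rb2 p).left q * S (a * (rb2 p).right q)))
        = S (a * b) := by
    set M : H ⊗[k] (H ⊗[k] H) →ₗ[k] H :=
      LinearMap.mul' k H ∘ₗ map (S)
        (LinearMap.mul' k H ∘ₗ map LinearMap.id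
          ((S) ∘ₗ (LinearMap.mulLeft k a))) with hM
    have E2 := congrArg M (Coalgebra.sum_tmul_tmul_eq (R := k) rb rb1 rb2)
    simp only [hM, map_sum, LinearMap.comp_apply, map_tmul, LinearMap.mul'_apply,
      LinearMap.mulLeft_apply, LinearMap.id_coe, id_eq] at E2
    rw [← E2]
    have e3 : ∀ p : rb.ι,
        ∑ q ∈ (rb1 p).index,
          S ((rb1 p).left q) * ((rb1 p).right q * S (a * rb.right p))
          = ε (rb.left p) • S (a * rb.right p) :=
      fun p => sum_S_mul k H _ (rb1 p)
    rw [Finset.sum_congr rfl (fun p _ => e3 p)]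
    exact counit_smul_apply k H rb ((S) ∘ₗ (LinearMap.mulLeft k a))
  -- assemble
  have hA : S b * S a = ∑ p ∈ rb.index, ∑ i ∈ ra.index,
      (ε (ra.right i) * ε (rb.right p)) • (S (rb.left p) * S (ra.left i)) := by
    conv_lhs => rw [← repr_counit_right k H ra, ← repr_counit_right k H rb]
    rw [map_sum, map_sum, Finset.sum_mul_sum]
    simp only [map_smul, smul_mul_smul_comm]
    exact Finset.sum_congr rfl fun p _ => Finset.sum_congr rfl fun i _ => by
      rw [mul_comm (ε (rb.right p))]
  rw [hA]
  refine Eq.symm ?_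
  calc
    ∑ p ∈ rb.index, ∑ i ∈ ra.index,
        (ε (ra.right i) * ε (rb.right p)) • (S (rb.left p) * S (ra.left i))
        = ∑ p ∈ rb.index, ∑ i ∈ ra.index, ∑ j ∈ (ra2 i).index, ∑ q ∈ (rb2 p).index,
            S (rb.left p) * (S (ra.left i) * ((ra2 i).left j *
              ((rb2 p).left q * S ((ra2 i).right j * (rb2 p).right q)))) := by
        refine Finset.sum_congr rfl fun p _ => Finset.sum_congr rfl fun i _ => ?_
        rw [show (ε (ra.right i) * ε (rb.right p)) • (S (rb.left p) * S (ra.left i))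
            = (S (rb.left p) * S (ra.left i)) * ((ε (ra.right i) * ε (rb.right p)) • (1:H)) from by
          rw [mul_smul_comm, mul_one]]
        rw [stepB i p, Finset.mul_sum]
        refine Finset.sum_congr rfl fun j _ => ?_
        rw [Finset.mul_sum]
        refine Finset.sum_congr rfl fun q _ => ?_
        simp only [mul_assoc]
    _ = ∑ p ∈ rb.index, ∑ q ∈ (rb2 p).index, ∑ i ∈ ra.index, ∑ j ∈ (ra2 i).index,
            S (rb.left p) * (S (ra.left i) * ((ra2 i).left j *
              ((rb2 p).left q * S ((ra2 i).right j * (rb2 p).right q)))) := by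
        refine Finset.sum_congr rfl fun p _ => ?_
        rw [Finset.sum_congr rfl (fun i _ => Finset.sum_comm), Finset.sum_comm]
    _ = ∑ p ∈ rb.index, ∑ q ∈ (rb2 p).index,
            S (rb.left p) * ((rb2 p).left q * S (a * (rb2 p).right q)) := by
        refine Finset.sum_congr rfl fun p _ => Finset.sum_congr rfl fun q _ => ?_
        rw [Finset.sum_congr rfl
          (fun i (_ : i ∈ ra.index) => (Finset.mul_sum (ra2 i).index _ (S (rb.left p))).symm),
          ← Finset.mul_sum, key1 p q]
    _ = S (a * b) := key2

end

section
variable (k : Type) [Field k] (H : Type) [Ring H] [HopfAlgebra k H] (Sinv : H →ₗ[k] H)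
open TensorProduct

lemma dcast_succ_tmul {a b : ℕ} (hab : a = b) (hs : a + 1 = b + 1) (x : H) (u : KC k H a) :
    dcast k H hs (x ⊗ₜ[k] u) = x ⊗ₜ[k] dcast k H hab u := by
  subst hab; rfl

lemma dcast_succ_apply {a b : ℕ} (hab : a = b) (hs : a + 1 = b + 1) (u : KC k H (a + 1)) :
    dcast k H hs u = TensorProduct.map LinearMap.id (dcast k H hab) (u : H ⊗[k] KC k H a) := by
  subst hab
  revert u
  show ∀ u : H ⊗[k] KC k H a, u = TensorProduct.map LinearMap.id LinearMap.id u
  intro u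
  simp

lemma assocK (hSm : ∀ a b : H, Sinv (a * b) = Sinv b * Sinv a) :
    ∀ (n m l : ℕ) (Ψ : KC k H n) (Φ : KC k H m) (Ξ : KC k H l),
      muK k H Sinv (m + n) l ((muK k H Sinv n m (Ψ ⊗ₜ[k] Φ)) ⊗ₜ[k] Ξ) =
        dcast k H (Nat.add_assoc l m n)
          (muK k H Sinv n (l + m) (Ψ ⊗ₜ[k] muK k H Sinv m l (Φ ⊗ₜ[k] Ξ))) := by
  intro n
  induction n with
  | zero =>
    intro m l Ψ Φ Ξ
    exact muK_lact k H Sinv hSm m l Ψ Φ Ξ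
  | succ n ihn =>
    intro m l Ψ Φ Ξ
    refine Eq.trans ?_
      (dcast_succ_apply k H (Nat.add_assoc l m n) (Nat.add_assoc l m (n + 1)) _).symm
    revert Ψ
    show ∀ Ψ : H ⊗[k] KC k H n,
      (TensorProduct.map LinearMap.id (muK k H Sinv (m + n) l) ∘ₗ
          (TensorProduct.assoc k H (KC k H (m + n)) (KC k H l)).toLinearMap)
        (((TensorProduct.map LinearMap.id (muK k H Sinv n m) ∘ₗ
          (TensorProduct.assoc k H (KC k H n) (KC k H m)).toLinearMap) (Ψ ⊗ₜ[k] Φ)) ⊗ₜ[k] Ξ)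
      = TensorProduct.map LinearMap.id (dcast k H (Nat.add_assoc l m n))
          ((TensorProduct.map LinearMap.id (muK k H Sinv n (l + m)) ∘ₗ
            (TensorProduct.assoc k H (KC k H n) (KC k H (l + m))).toLinearMap)
            (Ψ ⊗ₜ[k] muK k H Sinv m l (Φ ⊗ₜ[k] Ξ)))
    intro Ψ
    induction Ψ using TensorProduct.induction_on with
    | zero => simp
    | add u v hu hv => simp only [add_tmul, tmul_add, map_add, hu, hv]
    | tmul x Ψ' =>
      simp only [LinearMap.comp_apply, LinearEquiv.coe_coe, assoc_tmul, map_tmul,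
        LinearMap.id_apply, ihn m l Ψ' Φ Ξ]


theorem statement9
    (hS1 : Sinv ∘ₗ HopfAlgebra.antipode (R := k) = LinearMap.id)
    (hS2 : HopfAlgebra.antipode (R := k) ∘ₗ Sinv = LinearMap.id) :
    (∀ (n m l : ℕ) (Ψ : KC k H n) (Φ : KC k H m) (Ξ : KC k H l),
      muK k H Sinv (m + n) l ((muK k H Sinv n m (Ψ ⊗ₜ[k] Φ)) ⊗ₜ[k] Ξ) =
        dcast k H (Nat.add_assoc l m n)
          (muK k H Sinv n (l + m) (Ψ ⊗ₜ[k] muK k H Sinv m l (Φ ⊗ₜ[k] Ξ)))) ∧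
    (∀ (x1 b1 x2 b2 x3 b3 : H),
      muK k H Sinv 2 1
        ((muK k H Sinv 1 1 ((x1 ⊗ₜ[k] b1) ⊗ₜ[k] (x2 ⊗ₜ[k] b2))) ⊗ₜ[k] (x3 ⊗ₜ[k] b3)) =
      muK k H Sinv 1 2
        ((x1 ⊗ₜ[k] b1) ⊗ₜ[k]
          (muK k H Sinv 1 1 ((x2 ⊗ₜ[k] b2) ⊗ₜ[k] (x3 ⊗ₜ[k] b3))))) := by
  have hid1 : ∀ w : H, Sinv (HopfAlgebra.antipode (R := k) w) = w := by
    intro w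
    have := LinearMap.congr_fun hS1 w
    simpa using this
  have hid2 : ∀ w : H, HopfAlgebra.antipode (R := k) (Sinv w) = w := by
    intro w
    have := LinearMap.congr_fun hS2 w
    simpa using this
  have hinj : Function.Injective (fun w : H => HopfAlgebra.antipode (R := k) w) := by
    intro u v huv
    simp only at huv
    rw [← hid1 u, huv, hid1]
  have hSm : ∀ a b : H, Sinv (a * b) = Sinv b * Sinv a := by
    intro a b
    apply hinj
    show HopfAlgebra.antipode (R := k) (Sinv (a * b))
      = HopfAlgebra.antipode (R := k) (Sinv b * Sinv a)
    rw [hid2, antipode_mul k H, hid2, hid2]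
  refine ⟨assocK k H Sinv hSm, fun x1 b1 x2 b2 x3 b3 => ?_⟩
  exact assocK k H Sinv hSm 1 1 1 (x1 ⊗ₜ[k] b1) (x2 ⊗ₜ[k] b2) (x3 ⊗ₜ[k] b3)


end
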